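/- arXiv:1504.05506 — 8 statements merged into one kernel-verified Lean document; each statement's English description precedes it below -/
import Mathlib

section
/- The functions α(r) = 4C/(4C²r² + 1), l(r) = -8C²r/(4C²r² + 1), θ(r) = 2·arctan(2Cr) satisfy the system l' = -α² + 2Cα, α' = αl, θ' = α for every real constant C. -/
section QuadraticDenominator

variable {b : ℝ}

lemma hasDerivAt_mul_sq_add_one (b x : ℝ) :
    HasDerivAt (fun x => b * x ^ 2 + 1) (2 * b * x) x := by
  simpa [mul_comm, mul_left_comm] using ((hasDerivAt_pow 2 x).const_mul b).add_const 1

lemma mul_sq_add_one_ne_zero (hb : 0 ≤ b) (x : ℝ) : b * x ^ 2 + 1 ≠ 0 := by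
  positivity

lemma hasDerivAt_const_div_mul_sq_add_one (hb : 0 ≤ b) (a x : ℝ) :
    HasDerivAt (fun x => a / (b * x ^ 2 + 1)) (-(a * (2 * b * x)) / (b * x ^ 2 + 1) ^ 2) x := by
  simpa using (hasDerivAt_const x a).fun_div (hasDerivAt_mul_sq_add_one b x)
    (mul_sq_add_one_ne_zero hb x)

lemma hasDerivAt_mul_div_mul_sq_add_one (hb : 0 ≤ b) (a x : ℝ) :
    HasDerivAt (fun x => a * x / (b * x ^ 2 + 1))
      ((a * (b * x ^ 2 + 1) - a * x * (2 * b * x)) / (b * x ^ 2 + 1) ^ 2) x := by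
  simpa using ((hasDerivAt_id' x).const_mul a).fun_div (hasDerivAt_mul_sq_add_one b x)
    (mul_sq_add_one_ne_zero hb x)

end QuadraticDenominator

theorem cy_soliton_Q_zero (C : ℝ) :
    let α : ℝ → ℝ := fun r => 4*C/(4*C^2*r^2 + 1)
    let l : ℝ → ℝ := fun r => -8*C^2*r/(4*C^2*r^2 + 1)
    let θ : ℝ → ℝ := fun r => 2 * Real.arctan (2*C*r)
    ∀ r, deriv l r = -(α r)^2 + 2*C*(α r) ∧
      deriv α r = α r * l r ∧
      deriv θ r = α r := by
  intro α l θ r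
  have hb : 0 ≤ 4 * C ^ 2 := by positivity
  have hD := mul_sq_add_one_ne_zero hb r
  have hα := hasDerivAt_const_div_mul_sq_add_one hb (4 * C) r
  have hl := hasDerivAt_mul_div_mul_sq_add_one hb (-8 * C ^ 2) r
  have hθ : HasDerivAt θ (2 * (1 / (1 + (2 * C * r) ^ 2) * (2 * C))) r := by
    simpa using (((hasDerivAt_id r).const_mul (2 * C)).arctan).const_mul 2
  refine ⟨?_, ?_, ?_⟩
  · rw [hl.deriv]
    simp only [α]
    field_simp
    ring
  · rw [hα.deriv]
    simp only [α, l]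
    field_simp
    ring
  · rw [hθ.deriv]
    simp only [α]
    field_simp
    ring
end

section
/- Let C, R be real constants with R² > 4C², and set Q = √(R² - 4C²). Then the functions α(r) = 2RQ²e^{-rQ}/((e^{-rQ}R - 2C)² + Q²), l(r) = R²Q(e^{-2rQ} - 1)/((e^{-rQ}R - 2C)² + Q²), θ(r) = 2·arctan((2C - e^{-rQ}R)/Q) satisfy l' = -α² + 2Cα, α' = αl, and θ' = α. -/
/-! Put `E = exp (-r Q)`, so that `E' = -Q E`. All three functions are rational in `E` with the
common denominator `D = (E R - 2 C)² + Q²`, which is positive and, because `Q² = R² - 4 C²`,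
equals `R² (E² + 1) - 4 C R E`. Differentiating and clearing `D`, each equation becomes a
polynomial identity in `E`. -/

open Real

noncomputable def solitonDenom (C R Q r : ℝ) : ℝ := (exp (-r * Q) * R - 2 * C) ^ 2 + Q ^ 2

noncomputable def solitonAlpha (C R Q r : ℝ) : ℝ :=
  2 * R * Q ^ 2 * exp (-r * Q) / solitonDenom C R Q r

noncomputable def solitonL (C R Q r : ℝ) : ℝ :=
  R ^ 2 * Q * (exp (-2 * r * Q) - 1) / solitonDenom C R Q r

noncomputable def solitonTheta (C R Q r : ℝ) : ℝ := 2 * arctan ((2 * C - exp (-r * Q) * R) / Q)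

section
variable {C R Q : ℝ}

theorem hasDerivAt_exp_neg_mul (Q r : ℝ) :
    HasDerivAt (fun x => exp (-x * Q)) (-Q * exp (-r * Q)) r := by
  simpa [mul_comm] using ((hasDerivAt_id r).neg.mul_const Q).exp

theorem exp_neg_two_mul_mul (r Q : ℝ) : exp (-2 * r * Q) = exp (-r * Q) ^ 2 := by
  rw [← exp_nat_mul]; ring_nf

theorem solitonDenom_pos (hQ : Q ≠ 0) (r : ℝ) : 0 < solitonDenom C R Q r := by
  unfold solitonDenom; positivity

theorem solitonDenom_eq (hQR : Q ^ 2 = R ^ 2 - 4 * C ^ 2) (r : ℝ) :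
    solitonDenom C R Q r = R ^ 2 * (exp (-r * Q) ^ 2 + 1) - 4 * C * R * exp (-r * Q) := by
  rw [solitonDenom, hQR]; ring

theorem hasDerivAt_solitonDenom (r : ℝ) :
    HasDerivAt (solitonDenom C R Q)
      (-2 * Q * R * exp (-r * Q) * (exp (-r * Q) * R - 2 * C)) r := by
  refine ((((hasDerivAt_exp_neg_mul Q r).mul_const R).sub_const (2 * C)).pow 2).add_const (Q ^ 2)
    |>.congr_deriv ?_
  push_cast; ring

theorem hasDerivAt_solitonTheta (hQ : Q ≠ 0) (r : ℝ) :
    HasDerivAt (solitonTheta C R Q) (solitonAlpha C R Q r) r := by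
  refine ((((hasDerivAt_exp_neg_mul Q r).mul_const R).const_sub (2 * C)).div_const Q).arctan
    |>.const_mul 2 |>.congr_deriv ?_
  have hD := solitonDenom_pos (C := C) (R := R) hQ r
  rw [solitonAlpha]
  rw [solitonDenom] at hD ⊢
  field_simp
  ring

theorem hasDerivAt_solitonAlpha (hQ : Q ≠ 0) (hQR : Q ^ 2 = R ^ 2 - 4 * C ^ 2) (r : ℝ) :
    HasDerivAt (solitonAlpha C R Q) (solitonAlpha C R Q r * solitonL C R Q r) r := by
  have hD := solitonDenom_pos (C := C) (R := R) hQ r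
  refine ((hasDerivAt_exp_neg_mul Q r).const_mul (2 * R * Q ^ 2)).div
    (hasDerivAt_solitonDenom r) hD.ne' |>.congr_deriv ?_
  have hDeq := solitonDenom_eq (C := C) (R := R) hQR r
  rw [solitonAlpha, solitonL, exp_neg_two_mul_mul]
  generalize solitonDenom C R Q r = D at *
  generalize exp (-r * Q) = E at *
  field_simp
  rw [hDeq]
  ring

theorem hasDerivAt_solitonL (hQ : Q ≠ 0) (hQR : Q ^ 2 = R ^ 2 - 4 * C ^ 2) (r : ℝ) :
    HasDerivAt (solitonL C R Q) (-solitonAlpha C R Q r ^ 2 + 2 * C * solitonAlpha C R Q r) r := by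
  have hD := solitonDenom_pos (C := C) (R := R) hQ r
  have hE2 : HasDerivAt (fun x => exp (-2 * x * Q)) (-2 * Q * exp (-r * Q) ^ 2) r := by
    simp_rw [exp_neg_two_mul_mul]
    exact (hasDerivAt_exp_neg_mul Q r).pow 2 |>.congr_deriv (by push_cast; ring)
  refine ((hE2.sub_const 1).const_mul (R ^ 2 * Q)).div
    (hasDerivAt_solitonDenom r) hD.ne' |>.congr_deriv ?_
  have hDeq := solitonDenom_eq (C := C) (R := R) hQR r
  rw [solitonAlpha, exp_neg_two_mul_mul]
  generalize solitonDenom C R Q r = D at *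
  generalize exp (-r * Q) = E at *
  field_simp
  rw [hDeq]
  linear_combination 2 * R ^ 2 * E ^ 2 * hQR
end

theorem cy_soliton_Q_pos (C R : ℝ) (hR : R^2 > 4*C^2) :
    let Q : ℝ := Real.sqrt (R^2 - 4*C^2)
    let α : ℝ → ℝ := fun r =>
      2*R*Q^2*Real.exp (-r*Q) / ((Real.exp (-r*Q)*R - 2*C)^2 + Q^2)
    let l : ℝ → ℝ := fun r =>
      R^2*Q*(Real.exp (-2*r*Q) - 1) / ((Real.exp (-r*Q)*R - 2*C)^2 + Q^2)
    let θ : ℝ → ℝ := fun r => 2 * Real.arctan ((2*C - Real.exp (-r*Q)*R)/Q)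
    ∀ r, deriv l r = -(α r)^2 + 2*C*(α r) ∧
      deriv α r = α r * l r ∧
      deriv θ r = α r := by
  intro Q α l θ r
  have hQ : 0 < Q := sqrt_pos.2 (by linarith)
  have hQR : Q ^ 2 = R ^ 2 - 4 * C ^ 2 := sq_sqrt (by linarith)
  exact ⟨(hasDerivAt_solitonL hQ.ne' hQR r).deriv, (hasDerivAt_solitonAlpha hQ.ne' hQR r).deriv,
    (hasDerivAt_solitonTheta hQ.ne' r).deriv⟩
end

section
/- Let C, R be real constants with 4C² > R² and 2C + R cos(rQ) ≠ 0 for all r, where Q = √(4C² - R²). Then the functions α(r) = Q²/(2C + R cos(rQ)) and l(r) = QR sin(rQ)/(2C + R cos(rQ)) satisfy l' = -α² + 2Cα and α' = αl, and both α and l are periodic with period 2π/Q. -/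
/-!
With `D r = 2C + R cos (rQ)` one has `D' = -QR sin (rQ)`, so both equations follow from the
quotient rule. For `α' = α l` this is immediate; for `l'` the numerator reduces, via
`sin² + cos² = 1`, to `Q² R (R + 2C cos (rQ))`, which agrees with `Q² (2C D - Q²)` exactly when
`Q² (Q² - (4C² - R²)) = 0`. Periodicity holds because `α` and `l` are functions of
`(sin (rQ), cos (rQ))`.
-/

open Real

lemma Real.sqrt_eq_zero_or_sq_sqrt (x : ℝ) : √x = 0 ∨ √x ^ 2 = x := by
  rcases le_or_gt x 0 with hx | hx
  · exact .inl (sqrt_eq_zero'.mpr hx)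
  · exact .inr (sq_sqrt hx.le)

lemma Function.Periodic.sin_cos_comp_mul (F : ℝ → ℝ → ℝ) (Q : ℝ) :
    Function.Periodic (fun r => F (sin (r * Q)) (cos (r * Q))) (2 * π / Q) := by
  have h : Function.Periodic (fun x => F (sin x) (cos x)) (2 * π) := fun x => by
    simp only [sin_add_two_pi, cos_add_two_pi]
  exact h.mul_const' Q

lemma hasDerivAt_two_mul_add_mul_cos (C R Q r : ℝ) :
    HasDerivAt (fun r => 2 * C + R * cos (r * Q)) (-(Q * R * sin (r * Q))) r :=
  (((hasDerivAt_mul_const Q).cos.const_mul R).const_add (2 * C)).congr_deriv (by ring)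

section Soliton

variable {C R Q r : ℝ}

lemma hasDerivAt_soliton_alpha (hden : 2 * C + R * cos (r * Q) ≠ 0) :
    HasDerivAt (fun r => Q ^ 2 / (2 * C + R * cos (r * Q)))
      (Q ^ 2 / (2 * C + R * cos (r * Q)) * (Q * R * sin (r * Q) / (2 * C + R * cos (r * Q)))) r := by
  refine ((hasDerivAt_const r (Q ^ 2)).div (hasDerivAt_two_mul_add_mul_cos C R Q r) hden).congr_deriv ?_
  field_simp
  ring

lemma soliton_l_deriv_eq {s c : ℝ} (hsc : s ^ 2 + c ^ 2 = 1)
    (hQ : Q = 0 ∨ Q ^ 2 = 4 * C ^ 2 - R ^ 2) (hden : 2 * C + R * c ≠ 0) :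
    (Q * R * (c * Q) * (2 * C + R * c) - Q * R * s * -(Q * R * s)) / (2 * C + R * c) ^ 2 =
      -(Q ^ 2 / (2 * C + R * c)) ^ 2 + 2 * C * (Q ^ 2 / (2 * C + R * c)) := by
  have hQ' : Q ^ 2 * (Q ^ 2 - (4 * C ^ 2 - R ^ 2)) = 0 := by
    rcases hQ with rfl | hQ2 <;> simp [*]
  field_simp
  linear_combination Q ^ 2 * R ^ 2 * hsc + hQ'

lemma hasDerivAt_soliton_l (hQ : Q = 0 ∨ Q ^ 2 = 4 * C ^ 2 - R ^ 2)
    (hden : 2 * C + R * cos (r * Q) ≠ 0) :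
    HasDerivAt (fun r => Q * R * sin (r * Q) / (2 * C + R * cos (r * Q)))
      (-(Q ^ 2 / (2 * C + R * cos (r * Q))) ^ 2 + 2 * C * (Q ^ 2 / (2 * C + R * cos (r * Q)))) r :=
  (((hasDerivAt_mul_const Q).sin.const_mul (Q * R)).div
    (hasDerivAt_two_mul_add_mul_cos C R Q r) hden).congr_deriv
    (soliton_l_deriv_eq (sin_sq_add_cos_sq _) hQ hden)

end Soliton

theorem cy_soliton_Q_neg_general (C R : ℝ)
    (Q : ℝ) (hQ : Q = Real.sqrt (4*C^2 - R^2))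
    (hden : ∀ r : ℝ, 2*C + R*Real.cos (r*Q) ≠ 0) :
    let α : ℝ → ℝ := fun r => Q^2/(2*C + R*Real.cos (r*Q))
    let l : ℝ → ℝ := fun r => Q*R*Real.sin (r*Q)/(2*C + R*Real.cos (r*Q))
    (∀ r, deriv l r = -(α r)^2 + 2*C*(α r)) ∧
    (∀ r, deriv α r = α r * l r) ∧
    Function.Periodic α (2*Real.pi/Q) ∧ Function.Periodic l (2*Real.pi/Q) := by
  have hQ' : Q = 0 ∨ Q ^ 2 = 4 * C ^ 2 - R ^ 2 := hQ ▸ sqrt_eq_zero_or_sq_sqrt _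
  exact ⟨fun r => (hasDerivAt_soliton_l hQ' (hden r)).deriv,
    fun r => (hasDerivAt_soliton_alpha (hden r)).deriv,
    Function.Periodic.sin_cos_comp_mul (fun _ c => Q ^ 2 / (2 * C + R * c)) Q,
    Function.Periodic.sin_cos_comp_mul (fun s c => Q * R * s / (2 * C + R * c)) Q⟩

theorem cy_soliton_Q_neg (C R : ℝ) (hR : 4*C^2 > R^2)
    (Q : ℝ) (hQ : Q = Real.sqrt (4*C^2 - R^2))
    (hden : ∀ r : ℝ, 2*C + R*Real.cos (r*Q) ≠ 0) :
    let α : ℝ → ℝ := fun r => Q^2/(2*C + R*Real.cos (r*Q))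
    let l : ℝ → ℝ := fun r => Q*R*Real.sin (r*Q)/(2*C + R*Real.cos (r*Q))
    (∀ r, deriv l r = -(α r)^2 + 2*C*(α r)) ∧
    (∀ r, deriv α r = α r * l r) ∧
    Function.Periodic α (2*Real.pi/Q) ∧ Function.Periodic l (2*Real.pi/Q) :=
  cy_soliton_Q_neg_general C R Q hQ hden
end

section
/- For Q = √(4C² - R²) with |R| < 2C and C > 0, the function θ(r) = 2·arctan(((2C - R)/Q)·tan(rQ/2)) satisfies θ'(r) = Q²/(2C + R cos(rQ)) on every interval where tan(rQ/2) is defined. -/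
/-!
Write `x = rQ/2` and `k = (2C - R)/Q`. The chain rule gives
`θ' = 2k(Q/2) / (cos²x + k² sin²x) = (2C - R) Q² / (Q² cos²x + (2C - R)² sin²x)`,
and `Q² = (2C - R)(2C + R)` lets one cancel `2C - R`, leaving the denominator
`(2C + R) cos²x + (2C - R) sin²x = 2C + R cos 2x`.
-/

open Real

theorem hasDerivAt_arctan_mul_tan {f : ℝ → ℝ} {f' x : ℝ} (hf : HasDerivAt f f' x)
    (k : ℝ) (hcos : cos (f x) ≠ 0) :
    HasDerivAt (fun x => arctan (k * tan (f x)))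
      (k * f' / (cos (f x) ^ 2 + k ^ 2 * sin (f x) ^ 2)) x := by
  refine (((hasDerivAt_tan hcos).comp x hf).const_mul k).arctan.congr_deriv ?_
  simp only [Function.comp_apply, tan_eq_sin_div_cos]
  field_simp

theorem add_mul_cos_sq_add_sub_mul_sin_sq (a b x : ℝ) :
    (a + b) * cos x ^ 2 + (a - b) * sin x ^ 2 = a + b * cos (2 * x) := by
  rw [cos_two_mul]
  linear_combination (a - b) * sin_sq_add_cos_sq x

theorem add_mul_cos_pos {a b : ℝ} (hb : |b| < a) (y : ℝ) : 0 < a + b * cos y := by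
  have : |b * cos y| ≤ |b| := by
    simpa [abs_mul] using mul_le_of_le_one_right (abs_nonneg b) (abs_cos_le_one y)
  linarith [neg_abs_le (b * cos y)]

theorem cy_theta_deriv_general (C R : ℝ) (hR : |R| < 2*C)
    (Q : ℝ) (hQ : Q = Real.sqrt (4*C^2 - R^2)) :
    let θ : ℝ → ℝ := fun r => 2 * Real.arctan (((2*C - R)/Q) * Real.tan (r*Q/2))
    ∀ r, Real.cos (r*Q/2) ≠ 0 →
      HasDerivAt θ (Q^2/(2*C + R*Real.cos (r*Q))) r := by
  intro θ r hcos
  have hsq : 0 < (2*C - R) * (2*C + R) := by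
    have := abs_lt.mp hR
    nlinarith
  have hQ2 : Q ^ 2 = (2*C - R) * (2*C + R) := by
    rw [hQ, sq_sqrt] <;> nlinarith
  have hQpos : 0 < Q := hQ ▸ sqrt_pos.mpr (by nlinarith)
  have hRC : 0 < 2*C - R := by linarith [le_abs_self R]
  have hθ := (hasDerivAt_arctan_mul_tan ((hasDerivAt_mul_const Q).div_const 2)
    ((2*C - R)/Q) hcos).const_mul 2
  refine hθ.congr_deriv ?_
  set x := r * Q / 2
  have hden := add_mul_cos_pos hR (2 * x)
  rw [show r * Q = 2 * x by ring]
  rw [← add_mul_cos_sq_add_sub_mul_sin_sq] at hden ⊢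
  set D := (2*C + R) * cos x ^ 2 + (2*C - R) * sin x ^ 2
  have hk : cos x ^ 2 + ((2*C - R) / Q) ^ 2 * sin x ^ 2 = (2*C - R) * D / Q ^ 2 := by
    field_simp
    linear_combination cos x ^ 2 * hQ2
  rw [hk]
  field_simp

theorem cy_theta_deriv (C R : ℝ) (hR : |R| < 2*C) (hC : C > 0)
    (Q : ℝ) (hQ : Q = Real.sqrt (4*C^2 - R^2)) :
    let θ : ℝ → ℝ := fun r => 2 * Real.arctan (((2*C - R)/Q) * Real.tan (r*Q/2))
    ∀ r, Real.cos (r*Q/2) ≠ 0 →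
      HasDerivAt θ (Q^2/(2*C + R*Real.cos (r*Q))) r :=
  cy_theta_deriv_general C R hR Q hQ
end

section
/- Suppose α, β : ℝ → ℝ are differentiable with α + β nowhere zero, and suppose h, θ, G satisfy α = θ'/G, β = λ h⁻¹ sin θ, h' = -λ G cos θ with h nowhere zero, λ ≠ 0, G nowhere zero. Then β' = -(h'/h)(α + β), and hence h'/h = -β'/(α + β). -/
open Real

/-- Differentiating `β = c h⁻¹ sin θ` produces `-(h'/h) β + c h⁻¹ cos θ · θ'`; the constraint
`h' = -c g cos θ` turns the second term into `-(h'/h) a` when `θ' = a g`. -/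
theorem hasDerivAt_mul_inv_mul_sin {c a g h' r : ℝ} {θ h : ℝ → ℝ}
    (hθ : HasDerivAt θ (a * g) r) (hh : HasDerivAt h h' r) (hr : h r ≠ 0)
    (hh' : h' = -c * g * cos (θ r)) :
    HasDerivAt (fun s => c * (h s)⁻¹ * sin (θ s))
      (-(h' / h r) * (a + c * (h r)⁻¹ * sin (θ r))) r := by
  refine (((hh.inv hr).const_mul c).mul hθ.sin).congr_deriv ?_
  rw [Pi.inv_apply, hh']
  field_simp
  ring

theorem beta_prime_formula_general (lam : ℝ)
    (θ h G α β : ℝ → ℝ)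
    (hθ : Differentiable ℝ θ) (hh : Differentiable ℝ h)
    (hG0 : ∀ r, G r ≠ 0) (hh0 : ∀ r, h r ≠ 0)
    (hαβ : ∀ r, α r + β r ≠ 0)
    (hα : ∀ r, α r = deriv θ r / G r)
    (hβ : ∀ r, β r = lam * (h r)⁻¹ * Real.sin (θ r))
    (hhode : ∀ r, deriv h r = -lam * G r * Real.cos (θ r)) :
    ∀ r, deriv β r = -(deriv h r / h r) * (α r + β r) ∧
      deriv h r / h r = -(deriv β r) / (α r + β r) := by
  intro r
  have hθ' : HasDerivAt θ (α r * G r) r := by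
    rw [hα r, div_mul_cancel₀ _ (hG0 r)]
    exact (hθ r).hasDerivAt
  have hβ' : deriv β r = -(deriv h r / h r) * (α r + β r) := by
    rw [hβ r, funext hβ]
    exact (hasDerivAt_mul_inv_mul_sin hθ' (hh r).hasDerivAt (hh0 r) (hhode r)).deriv
  refine ⟨hβ', ?_⟩
  rw [hβ', neg_mul, neg_neg, mul_div_cancel_right₀ _ (hαβ r)]

theorem beta_prime_formula (lam : ℝ) (hlam : lam ≠ 0)
    (θ h G α β : ℝ → ℝ)
    (hθ : Differentiable ℝ θ) (hh : Differentiable ℝ h)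
    (hG0 : ∀ r, G r ≠ 0) (hh0 : ∀ r, h r ≠ 0)
    (hαβ : ∀ r, α r + β r ≠ 0)
    (hα : ∀ r, α r = deriv θ r / G r)
    (hβ : ∀ r, β r = lam * (h r)⁻¹ * Real.sin (θ r))
    (hhode : ∀ r, deriv h r = -lam * G r * Real.cos (θ r)) :
    ∀ r, deriv β r = -(deriv h r / h r) * (α r + β r) ∧
      deriv h r / h r = -(deriv β r) / (α r + β r) :=
  beta_prime_formula_general lam θ h G α β hθ hh hG0 hh0 hαβ hα hβ hhode
end

section
/- Under the hypotheses α = θ'/G, β = λh⁻¹ sin θ, h' = -λG cos θ (co-closed case γ = 0), with sin θ nowhere zero and α + β nowhere zero, one has (cot θ)·θ' = (β'/β)·(α/(α+β)), and consequently sin θ(r) = sin θ(0) · exp(∫₀ʳ (β'/β)·(α/(α+β)) ds). -/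
/-!
Differentiating `β = λ h⁻¹ sin θ` and inserting `h' = -λ G cos θ` gives
`β' / β = cot θ · G (α + β)`; since `G α = θ'`, the right-hand side `(β'/β) · α/(α+β)` is
`cot θ · θ'`, the logarithmic derivative of `sin θ`. A nowhere vanishing `C¹` function is
recovered from its logarithmic derivative `q` as `f r = f 0 · exp ∫₀ʳ q`, because
`f · exp (-∫₀ʳ q)` has derivative zero.
-/

open Real

theorem eq_mul_exp_integral_div_of_hasDerivAt {f f' : ℝ → ℝ} (hf : ∀ x, HasDerivAt f (f' x) x)
    (hf' : Continuous f') (hf0 : ∀ x, f x ≠ 0) (a b : ℝ) :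
    f b = f a * exp (∫ x in a..b, f' x / f x) := by
  have hcont : Continuous fun x => f' x / f x :=
    hf'.div (continuous_iff_continuousAt.2 fun x => (hf x).continuousAt) hf0
  set I : ℝ → ℝ := fun y => ∫ x in a..y, f' x / f x
  have hconst : ∀ y, HasDerivAt (fun y => f y * exp (-I y)) 0 y := by
    intro y
    refine ((hf y).mul (hcont.integral_hasStrictDerivAt a y).hasDerivAt.neg.exp).congr_deriv ?_
    field_simp [hf0 y]
    ring
  have h := is_const_of_deriv_eq_zero (fun y => (hconst y).differentiableAt)
    (fun y => (hconst y).deriv) b a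
  simp only [I, intervalIntegral.integral_same, neg_zero, exp_zero, mul_one] at h
  rw [← h, mul_assoc, ← exp_add, neg_add_cancel, exp_zero, mul_one]

theorem hasDerivAt_mul_inv_mul_sin_of_hasDerivAt_eq_cos {lam r : ℝ} {θ h G : ℝ → ℝ}
    (hθ : DifferentiableAt ℝ θ r) (hh : HasDerivAt h (-lam * G r * cos (θ r)) r) (hr : h r ≠ 0) :
    HasDerivAt (fun s => lam * (h s)⁻¹ * sin (θ s))
      (lam * (h r)⁻¹ * cos (θ r) * (deriv θ r + G r * (lam * (h r)⁻¹ * sin (θ r)))) r := by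
  refine (((hh.inv hr).const_mul lam).mul hθ.hasDerivAt.sin).congr_deriv ?_
  simp only [Pi.inv_apply]
  field_simp
  ring

theorem cos_div_sin_mul_deriv_eq {lam r : ℝ} {θ h G α β : ℝ → ℝ} (hlam : lam ≠ 0)
    (hθ : DifferentiableAt ℝ θ r) (hh : HasDerivAt h (-lam * G r * cos (θ r)) r)
    (hG : G r ≠ 0) (hhr : h r ≠ 0) (hsin : sin (θ r) ≠ 0) (hαβ : α r + β r ≠ 0)
    (hα : α r = deriv θ r / G r) (hβ : β = fun s => lam * (h s)⁻¹ * sin (θ s)) :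
    cos (θ r) / sin (θ r) * deriv θ r = deriv β r / β r * (α r / (α r + β r)) := by
  have hβr : β r = lam * (h r)⁻¹ * sin (θ r) := by rw [hβ]
  have hβ0 : β r ≠ 0 := hβr ▸ mul_ne_zero (mul_ne_zero hlam (inv_ne_zero hhr)) hsin
  have hβ' := hasDerivAt_mul_inv_mul_sin_of_hasDerivAt_eq_cos hθ hh hhr
  rw [← hβ, ← hβr] at hβ'
  have hlogDeriv : deriv β r / β r = cos (θ r) / sin (θ r) * G r * (α r + β r) := by
    rw [hβ'.deriv, hα, hβr]
    field_simp
  have hGα : G r * α r = deriv θ r := by rw [hα]; field_simp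
  rw [hlogDeriv, ← hGα]
  field_simp [hαβ]

theorem sin_theta_formula_general (lam : ℝ) (hlam : lam ≠ 0)
    (θ h G α β : ℝ → ℝ)
    (hθ : ContDiff ℝ 2 θ) (hh : ContDiff ℝ 2 h)
    (hG0 : ∀ r, G r > 0) (hh0 : ∀ r, h r ≠ 0)
    (hsin : ∀ r, Real.sin (θ r) ≠ 0)
    (hαβ : ∀ r, α r + β r ≠ 0)
    (hα : ∀ r, α r = deriv θ r / G r)
    (hβ : ∀ r, β r = lam * (h r)⁻¹ * Real.sin (θ r))
    (hhode : ∀ r, deriv h r = -lam * G r * Real.cos (θ r)) :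
    (∀ r, (Real.cos (θ r) / Real.sin (θ r)) * deriv θ r =
      (deriv β r / β r) * (α r / (α r + β r))) ∧
    (∀ r, Real.sin (θ r) = Real.sin (θ 0) *
      Real.exp (∫ s in (0:ℝ)..r, (deriv β s / β s) * (α s / (α s + β s)))) := by
  have hθd : Differentiable ℝ θ := hθ.differentiable two_ne_zero
  have hhd : Differentiable ℝ h := hh.differentiable two_ne_zero
  have hcot (r : ℝ) : cos (θ r) / sin (θ r) * deriv θ r =
      deriv β r / β r * (α r / (α r + β r)) :=
    cos_div_sin_mul_deriv_eq hlam (hθd r) (hhode r ▸ (hhd r).hasDerivAt) (hG0 r).ne' (hh0 r)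
      (hsin r) (hαβ r) (hα r) (funext hβ)
  refine ⟨hcot, fun r => ?_⟩
  have hintegrand : (fun s => deriv β s / β s * (α s / (α s + β s))) =
      fun s => cos (θ s) * deriv θ s / sin (θ s) := by
    funext s
    rw [← hcot, div_mul_eq_mul_div]
  rw [hintegrand]
  exact eq_mul_exp_integral_div_of_hasDerivAt (fun s => (hθd s).hasDerivAt.sin)
    ((continuous_cos.comp hθd.continuous).mul (hθ.continuous_deriv one_le_two)) hsin 0 r

theorem sin_theta_formula (lam : ℝ) (hlam : lam ≠ 0)
    (θ h G α β : ℝ → ℝ)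
    (hθ : ContDiff ℝ 2 θ) (hh : ContDiff ℝ 2 h) (hGd : ContDiff ℝ 1 G)
    (hG0 : ∀ r, G r > 0) (hh0 : ∀ r, h r ≠ 0)
    (hsin : ∀ r, Real.sin (θ r) ≠ 0)
    (hαβ : ∀ r, α r + β r ≠ 0)
    (hα : ∀ r, α r = deriv θ r / G r)
    (hβ : ∀ r, β r = lam * (h r)⁻¹ * Real.sin (θ r))
    (hhode : ∀ r, deriv h r = -lam * G r * Real.cos (θ r)) :
    (∀ r, (Real.cos (θ r) / Real.sin (θ r)) * deriv θ r =
      (deriv β r / β r) * (α r / (α r + β r))) ∧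
    (∀ r, Real.sin (θ r) = Real.sin (θ 0) *
      Real.exp (∫ s in (0:ℝ)..r, (deriv β s / β s) * (α s / (α s + β s)))) :=
  sin_theta_formula_general lam hlam θ h G α β hθ hh hG0 hh0 hsin hαβ hα hβ hhode
end

section
/- Let C be real and μ ≥ 0. Then the constants α = 4√(3μ) + 2C, β = (1/3)√(3μ), l = 0 satisfy 9β² - αβ + 2Cβ + μ = 0 and -α² + 3β² + 12αβ + 2Cα - μ = 0, and consequently also (9β² - αβ + 2Cβ + μ)(α + β) = 0. -/
theorem nk_constant_solution_5 (C μ : ℝ) (hμ : μ ≥ 0) :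
    let α : ℝ := 4*Real.sqrt (3*μ) + 2*C
    let β : ℝ := (1/3) * Real.sqrt (3*μ)
    9*β^2 - α*β + 2*C*β + μ = 0 ∧
    -α^2 + 3*β^2 + 12*α*β + 2*C*α - μ = 0 ∧
    (9*β^2 - α*β + 2*C*β + μ) * (α + β) = 0 := by
  intro α β
  have hs : Real.sqrt (3*μ) ^ 2 = 3*μ := Real.sq_sqrt (by linarith)
  have h1 : 9*β^2 - α*β + 2*C*β + μ = 0 := by simp only [α, β]; nlinarith [hs]
  have h2 : -α^2 + 3*β^2 + 12*α*β + 2*C*α - μ = 0 := by simp only [α, β]; nlinarith [hs]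
  exact ⟨h1, h2, by rw [h1]; ring⟩
end

section
/- Suppose α, β, l satisfy the nearly Kähler soliton system with α constant and l, β nonconstant: l' = -α² + 3β² + 12αβ + 2Cα - μ, β' = -(1/6)αl, β'l = (9β² - αβ + 2Cβ + μ)(α + β). Then the quantity F = αl² + 12(β³ + 6αβ² - (α² - 2Cα + μ)β) is conserved (F' = 0). -/
theorem nk_conserved_quantity (α C μ : ℝ) (l β : ℝ → ℝ)
    (hl : Differentiable ℝ l) (hβ : Differentiable ℝ β)
    (hlode : ∀ r, deriv l r = -α^2 + 3*(β r)^2 + 12*α*(β r) + 2*C*α - μ)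
    (hβode : ∀ r, deriv β r = -(1/6)*α*(l r))
    (hβl : ∀ r, deriv β r * l r = (9*(β r)^2 - α*(β r) + 2*C*(β r) + μ) * (α + β r)) :
    ∀ r, deriv (fun r => α*(l r)^2 +
      12*((β r)^3 + 6*α*(β r)^2 - (α^2 - 2*C*α + μ)*(β r))) r = 0 := by
  intro r
  have Hl : HasDerivAt l (deriv l r) r := (hl r).hasDerivAt
  have Hβ : HasDerivAt β (deriv β r) r := (hβ r).hasDerivAt
  have H : HasDerivAt (fun r => α*(l r)^2 +
      12*((β r)^3 + 6*α*(β r)^2 - (α^2 - 2*C*α + μ)*(β r)))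
      (α*(2*(l r)*(deriv l r)) +
        12*((3*(β r)^2*(deriv β r)) + 6*α*(2*(β r)*(deriv β r))
          - (α^2 - 2*C*α + μ)*(deriv β r))) r := by
    exact (((Hl.pow 2).const_mul α).add
      ((((Hβ.pow 3).add ((Hβ.pow 2).const_mul (6*α))).sub
        (Hβ.const_mul (α^2 - 2*C*α + μ))).const_mul 12)).congr_deriv (by ring)
  rw [H.deriv, hlode, hβode]
  ring
end
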